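/- arXiv:1706.05830 — 2 statements merged into one kernel-verified Lean document; each statement's English description precedes it below -/
import Mathlib

section
/- Let F_q be a finite field, n a positive integer, and C_a, C_b, C_z nonzero F_q-linear subspaces of F_q^n with C_z ⊆ C_b ⊆ C_a, having minimum distances d_a, d_b, d_z respectively. Let α ∈ F_q with α ≠ 0 and α ≠ 1. Then for every (a, b, z) ∈ C_a × C_b × C_z with (a, b, z) ≠ (0, 0, 0), the Hamming weight of the concatenated vector (a | a+b | a+αb+z) ∈ F_q^{3n} satisfies wt(a) + wt(a+b) + wt(a+αb+z) ≥ min{3d_a, 2d_b, d_z}. In other words, the code C = {(a | a+b | a+αb+z) : a ∈ C_a, b ∈ C_b, z ∈ C_z} has minimum distance at least min{3d_a, 2d_b, d_z}. -/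
/-!
At a coordinate where `b i ≠ 0`, the entries `a i`, `a i + b i` and `a i + α • b i` are pairwise
distinct because `α ∉ {0, 1}`, so at most one of them vanishes; hence the three blocks weigh at
least `2 wt(b)`. If `z ≠ 0`, then `z = (α - 1) • a - α • (a + b) + (a + α • b + z)`, so they weigh
at least `wt(z)`. If `b = z = 0` the three blocks are all `a`.
-/

/-- Concatenation `(u | v | w)` of three vectors of length `n` into a vector of length `3n`. -/
def cat3 {F : Type*} {n : ℕ} (u v w : Fin n → F) : Fin (n + n + n) → F :=
  Fin.append (Fin.append u v) w

/-- `d` is the minimum distance of the (nonzero) linear code `C`: it is the least element of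
the set of Hamming weights of nonzero codewords of `C`. -/
def IsMinDist {F : Type*} [Field F] [DecidableEq F] {m : ℕ}
    (C : Submodule F (Fin m → F)) (d : ℕ) : Prop :=
  IsLeast {w : ℕ | ∃ c ∈ C, c ≠ 0 ∧ hammingNorm c = w} d

section Hamming

variable {ι M : Type*} [Fintype ι] [DecidableEq M]

theorem hammingNorm_add_le [AddGroup M] (x y : ι → M) :
    hammingNorm (x + y) ≤ hammingNorm x + hammingNorm y := by
  simpa only [hammingDist_eq_hammingNorm, neg_neg, neg_zero, add_zero, zero_add] using
    hammingDist_triangle (-x) 0 y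

theorem two_le_ite_ne_zero_add_add [Zero M] {x y w : M} (hxy : x ≠ y) (hxw : x ≠ w)
    (hyw : y ≠ w) :
    2 ≤ (if x ≠ 0 then 1 else 0) + (if y ≠ 0 then 1 else 0) + (if w ≠ 0 then 1 else 0) := by
  split_ifs <;> simp_all

theorem two_mul_hammingNorm_le {K : Type*} [DivisionRing K] [AddCommGroup M] [Module K M]
    (a b : ι → M) {α : K} (hα0 : α ≠ 0) (hα1 : α ≠ 1) :
    2 * hammingNorm b ≤ hammingNorm a + hammingNorm (a + b) + hammingNorm (a + α • b) := by
  simp only [hammingNorm, Finset.card_filter, Finset.mul_sum, ← Finset.sum_add_distrib]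
  refine Finset.sum_le_sum fun i _ => ?_
  by_cases hb : b i = 0
  · simp [hb]
  have hαb : α • b i ≠ 0 := smul_ne_zero hα0 hb
  have hα1b : α • b i - b i ≠ 0 := by
    simpa only [sub_smul, one_smul] using smul_ne_zero (sub_ne_zero.mpr hα1) hb
  refine le_of_eq_of_le (by simp [hb]) (two_le_ite_ne_zero_add_add (M := M) ?_ ?_ ?_)
  · simpa using hb
  · simpa using hαb
  · simpa [eq_comm, sub_eq_zero] using hα1b

theorem hammingNorm_le_add_add {R : Type*} [Ring R] [AddCommGroup M] [Module R M]
    (a b z : ι → M) (α : R) :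
    hammingNorm z ≤ hammingNorm a + hammingNorm (a + b) + hammingNorm (a + α • b + z) := by
  have hz : z = (α - 1) • a + ((-α) • (a + b) + (a + α • b + z)) := by
    simp only [sub_smul, one_smul, neg_smul, smul_add]
    abel
  calc hammingNorm z
      = hammingNorm ((α - 1) • a + ((-α) • (a + b) + (a + α • b + z))) := congrArg _ hz
    _ ≤ hammingNorm ((α - 1) • a) + (hammingNorm ((-α) • (a + b)) +
          hammingNorm (a + α • b + z)) :=
        (hammingNorm_add_le _ _).trans (Nat.add_le_add_left (hammingNorm_add_le _ _) _)
    _ ≤ _ := by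
        have ha := hammingNorm_smul_le_hammingNorm (k := α - 1) (x := a)
        have hab := hammingNorm_smul_le_hammingNorm (k := -α) (x := a + b)
        omega

end Hamming

theorem IsMinDist.le_hammingNorm {F : Type*} [Field F] [DecidableEq F] {m : ℕ}
    {C : Submodule F (Fin m → F)} {d : ℕ} (h : IsMinDist C d) {c : Fin m → F} (hc : c ∈ C)
    (hc0 : c ≠ 0) : d ≤ hammingNorm c :=
  h.2 ⟨c, hc, hc0, rfl⟩

theorem stmt_1_general (F : Type*) [Field F] [DecidableEq F] (n : ℕ)
    (Ca Cb Cz : Submodule F (Fin n → F))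
    (da db dz : ℕ) (hda : IsMinDist Ca da) (hdb : IsMinDist Cb db) (hdz : IsMinDist Cz dz)
    (α : F) (hα0 : α ≠ 0) (hα1 : α ≠ 1) :
    ∀ a ∈ Ca, ∀ b ∈ Cb, ∀ z ∈ Cz, ¬(a = 0 ∧ b = 0 ∧ z = 0) →
      min (3 * da) (min (2 * db) dz) ≤
        hammingNorm a + hammingNorm (a + b) + hammingNorm (a + α • b + z) := by
  intro a ha b hb z hz hne
  by_cases hz0 : z = 0
  · subst hz0
    rw [add_zero]
    by_cases hb0 : b = 0
    · subst hb0
      have := hda.le_hammingNorm ha fun h => hne ⟨h, rfl, rfl⟩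
      simp only [add_zero, smul_zero]
      omega
    · have := hdb.le_hammingNorm hb hb0
      have := two_mul_hammingNorm_le a b hα0 hα1
      omega
  · have := hdz.le_hammingNorm hz hz0
    have := hammingNorm_le_add_add a b z α
    omega

/-- Let `C_z ⊆ C_b ⊆ C_a ⊆ F^n` be nonzero subspaces with minimum distances
`d_z, d_b, d_a`, and `α ∈ F`, `α ≠ 0`, `α ≠ 1`. Then for every `(a,b,z) ≠ (0,0,0)` the weight
of `(a | a+b | a+αb+z)` is at least `min {3d_a, 2d_b, d_z}`; i.e. the code
`C = {(a | a+b | a+αb+z)}` has minimum distance at least `min {3d_a, 2d_b, d_z}`. -/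
theorem stmt_1 (F : Type*) [Field F] [Fintype F] [DecidableEq F] (n : ℕ) (hn : 0 < n)
    (Ca Cb Cz : Submodule F (Fin n → F))
    (hCa : Ca ≠ ⊥) (hCb : Cb ≠ ⊥) (hCz : Cz ≠ ⊥)
    (hzb : Cz ≤ Cb) (hba : Cb ≤ Ca)
    (da db dz : ℕ) (hda : IsMinDist Ca da) (hdb : IsMinDist Cb db) (hdz : IsMinDist Cz dz)
    (α : F) (hα0 : α ≠ 0) (hα1 : α ≠ 1) :
    ∀ a ∈ Ca, ∀ b ∈ Cb, ∀ z ∈ Cz, ¬(a = 0 ∧ b = 0 ∧ z = 0) →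
      min (3 * da) (min (2 * db) dz) ≤
        hammingNorm a + hammingNorm (a + b) + hammingNorm (a + α • b + z) :=
  stmt_1_general F n Ca Cb Cz da db dz hda hdb hdz α hα0 hα1
end

section
/- Let F_q be a finite field, n a positive integer, and C_a, C_b, C_z nonzero F_q-linear subspaces of F_q^n with C_z ⊆ C_b ⊆ C_a, having minimum distances d_a, d_b, d_z respectively. Let α ∈ F_q with α ≠ 0 and α ≠ 1. Then the code C = {(a | a+b | a+αb+z) : a ∈ C_a, b ∈ C_b, z ∈ C_z} ⊆ F_q^{3n} is a linear code of length 3n, dimension dim C_a + dim C_b + dim C_z, and minimum distance exactly min{3d_a, 2d_b, d_z}. -/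
set_option linter.unusedSectionVars false
set_option linter.unusedVariables false

/-- The code `C = {(a | a+b | a+αb+z) : a ∈ C_a, b ∈ C_b, z ∈ C_z}` as a set of words. -/
def codeSet {F : Type*} [Field F] {n : ℕ} (α : F)
    (Ca Cb Cz : Submodule F (Fin n → F)) : Set (Fin (n + n + n) → F) :=
  {c | ∃ a ∈ Ca, ∃ b ∈ Cb, ∃ z ∈ Cz, c = cat3 a (a + b) (a + α • b + z)}

section aux

variable {F : Type*} [Field F] [DecidableEq F] {n : ℕ}

lemma hammingNorm_append {m k : ℕ} (u : Fin m → F) (v : Fin k → F) :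
    hammingNorm (Fin.append u v) = hammingNorm u + hammingNorm v := by
  simp only [hammingNorm, Finset.card_filter]
  rw [Fin.sum_univ_add]
  simp [Fin.append_left, Fin.append_right]

lemma hammingNorm_cat3 (u v w : Fin n → F) :
    hammingNorm (cat3 u v w) = hammingNorm u + hammingNorm v + hammingNorm w := by
  simp [cat3, hammingNorm_append]

lemma append_add {m k : ℕ} (u u' : Fin m → F) (v v' : Fin k → F) :
    Fin.append (u + u') (v + v') = Fin.append u v + Fin.append u' v' := by
  funext i
  induction i using Fin.addCases <;> simp [Fin.append_left, Fin.append_right]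

lemma append_smul {m k : ℕ} (c : F) (u : Fin m → F) (v : Fin k → F) :
    Fin.append (c • u) (c • v) = c • Fin.append u v := by
  funext i
  induction i using Fin.addCases <;> simp [Fin.append_left, Fin.append_right]

lemma cat3_add (u u' v v' w w' : Fin n → F) :
    cat3 (u + u') (v + v') (w + w') = cat3 u v w + cat3 u' v' w' := by
  simp [cat3, append_add]

lemma cat3_smul (c : F) (u v w : Fin n → F) :
    cat3 (c • u) (c • v) (c • w) = c • cat3 u v w := by
  simp [cat3, append_smul]

lemma cat3_eq_iff {u v w u' v' w' : Fin n → F} (h : cat3 u v w = cat3 u' v' w') :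
    u = u' ∧ v = v' ∧ w = w' := by
  refine ⟨funext fun i => ?_, funext fun i => ?_, funext fun i => ?_⟩
  · have := congrFun h (Fin.castAdd n (Fin.castAdd n i))
    simpa only [cat3, Fin.append_left] using this
  · have := congrFun h (Fin.castAdd n (Fin.natAdd n i))
    simpa only [cat3, Fin.append_left, Fin.append_right] using this
  · have := congrFun h (Fin.natAdd (n + n) i)
    simpa only [cat3, Fin.append_right] using this

/-- The linear map `(a, b, z) ↦ (a | a+b | a+αb+z)`. -/
def catMap (α : F) :
    ((Fin n → F) × (Fin n → F) × (Fin n → F)) →ₗ[F] (Fin (n + n + n) → F) where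
  toFun x := cat3 x.1 (x.1 + x.2.1) (x.1 + α • x.2.1 + x.2.2)
  map_add' := by
    rintro ⟨a, b, z⟩ ⟨a', b', z'⟩
    simp only [Prod.mk_add_mk, Prod.fst, Prod.snd]
    have h2 : a + a' + (b + b') = (a + b) + (a' + b') := by abel
    have h3 : a + a' + α • (b + b') + (z + z')
        = (a + α • b + z) + (a' + α • b' + z') := by rw [smul_add]; abel
    rw [h2, h3, cat3_add]
  map_smul' := by
    rintro c ⟨a, b, z⟩
    simp only [Prod.smul_mk, RingHom.id_apply]
    have h2 : c • a + c • b = c • (a + b) := (smul_add c a b).symm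
    have h3 : c • a + α • (c • b) + c • z = c • (a + α • b + z) := by
      rw [smul_add, smul_add, smul_comm c α]
    rw [h2, h3, cat3_smul]

lemma cat3_zero : cat3 (0 : Fin n → F) 0 0 = 0 := by
  simpa using cat3_smul (0 : F) (0 : Fin n → F) 0 0

lemma catMap_injective (α : F) :
    Function.Injective (catMap (F := F) (n := n) α) := by
  intro x y h
  obtain ⟨h1, h2, h3⟩ := cat3_eq_iff h
  have hb : x.2.1 = y.2.1 := by
    rw [h1] at h2; exact add_left_cancel h2
  have hz : x.2.2 = y.2.2 := by
    rw [h1, hb] at h3; exact add_left_cancel h3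
  exact Prod.ext h1 (Prod.ext hb hz)

/-- A submodule product is linearly equivalent to the product of the submodules. -/
def subProdEquiv {R M N : Type*} [Ring R] [AddCommGroup M] [AddCommGroup N]
    [Module R M] [Module R N] (p : Submodule R M) (q : Submodule R N) :
    ↥(p.prod q) ≃ₗ[R] ↥p × ↥q where
  toFun x := (⟨(x : M × N).1, x.2.1⟩, ⟨(x : M × N).2, x.2.2⟩)
  invFun y := ⟨(y.1, y.2), ⟨y.1.2, y.2.2⟩⟩
  left_inv x := rfl
  right_inv y := rfl
  map_add' x y := rfl
  map_smul' c x := rfl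

lemma hammingNorm_as_sum (u : Fin n → F) :
    hammingNorm u = ∑ i, if u i ≠ 0 then 1 else 0 := by
  simp [hammingNorm, Finset.card_filter]

lemma ind_le {x y z α : F} :
    (if z ≠ 0 then 1 else 0) ≤ (if x ≠ 0 then 1 else 0) + ((if x + y ≠ 0 then 1 else 0)
      + (if x + α * y + z ≠ 0 then 1 else 0) : ℕ) := by
  by_cases hz : z = 0
  · simp [hz]
  rcases eq_or_ne x 0 with hx | hx
  · rcases eq_or_ne y 0 with hy | hy
    · have h3 : x + α * y + z ≠ 0 := by simp [hx, hy, hz]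
      simp only [h3, if_pos, ne_eq, not_true_eq_false]
      split_ifs <;> first | omega | contradiction
    · have h2 : x + y ≠ 0 := by simp [hx, hy]
      simp only [h2, if_pos, ne_eq]
      split_ifs <;> first | omega | contradiction
  · simp only [hx, if_pos, ne_eq]
    split_ifs <;> first | omega | contradiction

lemma ind_le2 {x y α : F} (hα0 : α ≠ 0) (hα1 : α ≠ 1) :
    2 * (if y ≠ 0 then 1 else 0) ≤ (if x ≠ 0 then 1 else 0) + ((if x + y ≠ 0 then 1 else 0)
      + (if x + α * y ≠ 0 then 1 else 0) : ℕ) := by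
  by_cases hy : y = 0
  · simp [hy]
  rcases eq_or_ne x 0 with hx | hx
  · have h2 : x + y ≠ 0 := by simp [hx, hy]
    have h3 : x + α * y ≠ 0 := by simp [hx, mul_ne_zero hα0 hy]
    simp only [h2, h3, ne_eq]
    split_ifs <;> first | omega | contradiction
  · by_cases h1 : x + y = 0
    · have h3 : x + α * y ≠ 0 := by
        intro h3
        have hsub : (α - 1) * y = 0 := by linear_combination h3 - h1
        rcases mul_eq_zero.mp hsub with h | h
        · exact hα1 (sub_eq_zero.mp h)
        · exact hy h
      simp only [hx, h3, ne_eq]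
      split_ifs <;> first | omega | contradiction
    · simp only [hx, h1, ne_eq]
      split_ifs <;> first | omega | contradiction

lemma wt_lower1 (α : F) (a b z : Fin n → F) :
    hammingNorm z ≤
      hammingNorm a + (hammingNorm (a + b) + hammingNorm (a + α • b + z)) := by
  simp only [hammingNorm_as_sum, ← Finset.sum_add_distrib]
  refine Finset.sum_le_sum fun i _ => ?_
  simpa [Pi.add_apply, Pi.smul_apply, smul_eq_mul] using
    ind_le (x := a i) (y := b i) (z := z i) (α := α)

lemma wt_lower2 {α : F} (hα0 : α ≠ 0) (hα1 : α ≠ 1) (a b : Fin n → F) :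
    2 * hammingNorm b ≤
      hammingNorm a + (hammingNorm (a + b) + hammingNorm (a + α • b)) := by
  simp only [hammingNorm_as_sum, ← Finset.sum_add_distrib, Finset.mul_sum]
  refine Finset.sum_le_sum fun i _ => ?_
  simpa [Pi.add_apply, Pi.smul_apply, smul_eq_mul] using
    ind_le2 (x := a i) (y := b i) hα0 hα1

end aux

/-- Let `C_z ⊆ C_b ⊆ C_a ⊆ F^n` be nonzero subspaces with minimum distances
`d_z, d_b, d_a`, and let `α ∈ F`, `α ≠ 0`, `α ≠ 1`. Then
`C = {(a | a+b | a+αb+z)} ⊆ F^{3n}` is a linear code of length `3n`, of dimension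
`dim C_a + dim C_b + dim C_z`, and of minimum distance exactly `min {3d_a, 2d_b, d_z}`. -/
theorem stmt_5 (F : Type*) [Field F] [Fintype F] [DecidableEq F] (n : ℕ) (hn : 0 < n)
    (Ca Cb Cz : Submodule F (Fin n → F))
    (hCa : Ca ≠ ⊥) (hCb : Cb ≠ ⊥) (hCz : Cz ≠ ⊥)
    (hzb : Cz ≤ Cb) (hba : Cb ≤ Ca)
    (da db dz : ℕ) (hda : IsMinDist Ca da) (hdb : IsMinDist Cb db) (hdz : IsMinDist Cz dz)
    (α : F) (hα0 : α ≠ 0) (hα1 : α ≠ 1) :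
    ∃ C : Submodule F (Fin (n + n + n) → F),
      (C : Set (Fin (n + n + n) → F)) = codeSet α Ca Cb Cz ∧
      Module.finrank F C =
        Module.finrank F Ca + Module.finrank F Cb + Module.finrank F Cz ∧
      IsMinDist C (min (3 * da) (min (2 * db) dz)) := by
  classical
  set L := catMap (F := F) (n := n) α with hL
  set C := Submodule.map L (Ca.prod (Cb.prod Cz)) with hC
  have hset : (C : Set (Fin (n + n + n) → F)) = codeSet α Ca Cb Cz := by
    ext c
    simp only [hC, Submodule.map_coe, Set.mem_image, SetLike.mem_coe, Submodule.mem_prod,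
      codeSet, Set.mem_setOf_eq]
    constructor
    · rintro ⟨⟨a, b, z⟩, ⟨ha, hb, hz⟩, rfl⟩
      exact ⟨a, ha, b, hb, z, hz, rfl⟩
    · rintro ⟨a, ha, b, hb, z, hz, rfl⟩
      exact ⟨(a, b, z), ⟨ha, hb, hz⟩, rfl⟩
  have hmemC : ∀ c, c ∈ C ↔ c ∈ codeSet α Ca Cb Cz := by
    intro c; rw [← SetLike.mem_coe, hset]
  -- positivity of the distances
  have hda1 : 1 ≤ da := by
    obtain ⟨c, _, hc0, hcw⟩ := hda.1
    have := hammingNorm_ne_zero_iff.mpr hc0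
    omega
  have hdb1 : 1 ≤ db := by
    obtain ⟨c, _, hc0, hcw⟩ := hdb.1
    have := hammingNorm_ne_zero_iff.mpr hc0
    omega
  have hdz1 : 1 ≤ dz := by
    obtain ⟨c, _, hc0, hcw⟩ := hdz.1
    have := hammingNorm_ne_zero_iff.mpr hc0
    omega
  refine ⟨C, hset, ?_, ?_, ?_⟩
  · -- dimension
    rw [(Submodule.equivMapOfInjective L (catMap_injective α)
        (Ca.prod (Cb.prod Cz))).symm.finrank_eq]
    rw [(subProdEquiv Ca (Cb.prod Cz)).finrank_eq, Module.finrank_prod,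
      (subProdEquiv Cb Cz).finrank_eq, Module.finrank_prod]
    ring
  · -- the minimum is attained
    have hαreg : IsSMulRegular F α := fun x y hxy => by
      simpa using mul_left_cancel₀ hα0 (by simpa using hxy)
    rcases min_cases (3 * da) (min (2 * db) dz) with ⟨hm, hle⟩ | ⟨hm, hlt⟩
    · -- min = 3 * da
      obtain ⟨a, haC, ha0, haw⟩ := hda.1
      have hw : hammingNorm (cat3 a (a + 0) (a + α • (0 : Fin n → F) + 0)) = 3 * da := by
        rw [hammingNorm_cat3]
        simp only [add_zero, smul_zero]
        omega
      refine ⟨cat3 a (a + 0) (a + α • (0 : Fin n → F) + 0),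
        (hmemC _).mpr ⟨a, haC, 0, Cb.zero_mem, 0, Cz.zero_mem, rfl⟩,
        hammingNorm_ne_zero_iff.mp (by rw [hw]; omega), by rw [hw, hm]⟩
    rcases min_cases (2 * db) dz with ⟨hm2, hle2⟩ | ⟨hm2, hlt2⟩
    · -- min = 2 * db
      obtain ⟨b, hbC, hb0, hbw⟩ := hdb.1
      have hw : hammingNorm (cat3 (0 : Fin n → F) (0 + b) (0 + α • b + 0)) = 2 * db := by
        rw [hammingNorm_cat3]
        simp only [zero_add, add_zero, hammingNorm_zero, hammingNorm_smul (fun _ => hαreg)]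
        omega
      refine ⟨cat3 (0 : Fin n → F) (0 + b) (0 + α • b + 0),
        (hmemC _).mpr ⟨0, Ca.zero_mem, b, hbC, 0, Cz.zero_mem, rfl⟩,
        hammingNorm_ne_zero_iff.mp (by rw [hw]; omega), by rw [hw, hm, hm2]⟩
    · -- min = dz
      obtain ⟨z, hzC, hz0, hzw⟩ := hdz.1
      have hw : hammingNorm (cat3 (0 : Fin n → F) (0 + 0) (0 + α • (0 : Fin n → F) + z))
          = dz := by
        rw [hammingNorm_cat3]
        simp only [zero_add, add_zero, smul_zero, hammingNorm_zero, hzw]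
      refine ⟨cat3 (0 : Fin n → F) (0 + 0) (0 + α • (0 : Fin n → F) + z),
        (hmemC _).mpr ⟨0, Ca.zero_mem, 0, Cb.zero_mem, z, hzC, rfl⟩,
        hammingNorm_ne_zero_iff.mp (by rw [hw]; omega), by rw [hw, hm, hm2]⟩
  · -- lower bound
    rintro w ⟨c, hcC, hc0, rfl⟩
    obtain ⟨a, ha, b, hb, z, hz, rfl⟩ := (hmemC _).mp hcC
    rw [hammingNorm_cat3]
    by_cases hz0 : z = 0
    · subst hz0
      by_cases hb0 : b = 0
      · subst hb0
        simp only [add_zero, smul_zero] at hc0 ⊢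
        have ha0 : a ≠ 0 := fun h => hc0 (by rw [h]; exact cat3_zero)
        have := hda.2 ⟨a, ha, ha0, rfl⟩
        have h1 : min (3 * da) (min (2 * db) dz) ≤ 3 * da := min_le_left _ _
        omega
      · have hkey := wt_lower2 hα0 hα1 a b
        have := hdb.2 ⟨b, hb, hb0, rfl⟩
        have h1 : min (3 * da) (min (2 * db) dz) ≤ 2 * db :=
          le_trans (min_le_right _ _) (min_le_left _ _)
        simp only [add_zero] at *
        omega
    · have hkey := wt_lower1 α a b z
      have := hdz.2 ⟨z, hz, hz0, rfl⟩
      have h1 : min (3 * da) (min (2 * db) dz) ≤ dz :=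
        le_trans (min_le_right _ _) (min_le_right _ _)
      omega
end
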